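/- For a side S of 𝒯 with endpoint A and δ > 0 with 4δ < d_A, define L_{S,A}(δ) = {x ∈ ℝ³ : y(x) ∈ (0, δ), r(x) ∈ (0, y(x)·tan(θ_A/3))} (where the cylindrical coordinates are taken with respect to ψ_{F,S,A} for any face F containing S). Then for any vertex Ã, any side S̃ of 𝒯 with endpoint Ã, and any δ̃ > 0 with 4δ̃ < d_Ã, either (Ã = A and S̃ = S) or L_{S,A}(δ) ∩ L_{S̃,Ã}(δ̃) = ∅. Moreover L_{S,A}(δ) ⊂ S + B(0, δ). -/

import Mathlib

open Set Metric Real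
open scoped Classical

noncomputable section

abbrev E3 := EuclideanSpace ℝ (Fin 3)

/-- A locally finite simplicial complex of 3-simplices on a set `Ω ⊆ ℝ³`. -/
structure SC3 (Ω : Set E3) where
  simplices : Set (Set E3)
  countable : simplices.Countable
  isSimplex : ∀ T ∈ simplices, ∃ v : Fin 4 → E3,
    AffineIndependent ℝ v ∧ T = convexHull ℝ (Set.range v)
  pairwiseDisjointInteriors : simplices.Pairwise fun T T' => interior T ∩ interior T' = ∅
  union_eq : ⋃₀ simplices = Ω
  locallyFinite : ∀ x ∈ Ω, ∃ r > 0, {T | T ∈ simplices ∧ (T ∩ ball x r).Nonempty}.Finite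

variable {Ω : Set E3}

/-- `v` is a vertex representation of a simplex of the complex. -/
def HasVerts (𝒯 : SC3 Ω) (v : Fin 4 → E3) : Prop :=
  AffineIndependent ℝ v ∧ convexHull ℝ (Set.range v) ∈ 𝒯.simplices

/-- `A` is a vertex (0-subsimplex) of the complex. -/
def IsVertex (𝒯 : SC3 Ω) (A : E3) : Prop :=
  ∃ v : Fin 4 → E3, HasVerts 𝒯 v ∧ A ∈ Set.range v

/-- `S` is a side (1-subsimplex) of the complex with endpoints `A`, `A'`. -/
def IsSideWith (𝒯 : SC3 Ω) (A A' : E3) (S : Set E3) : Prop :=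
  ∃ v : Fin 4 → E3, HasVerts 𝒯 v ∧ ∃ i j : Fin 4, i ≠ j ∧ A = v i ∧ A' = v j ∧
    S = segment ℝ A A'

/-- `F` is a face (2-subsimplex) of the complex with vertices `A`, `B`, `P`. -/
def IsFaceWith (𝒯 : SC3 Ω) (A B P : E3) (F : Set E3) : Prop :=
  ∃ v : Fin 4 → E3, HasVerts 𝒯 v ∧ ∃ i j k : Fin 4, i ≠ j ∧ j ≠ k ∧ i ≠ k ∧
    A = v i ∧ B = v j ∧ P = v k ∧ F = convexHull ℝ {A, B, P}

/-- `V` is a subsimplex of the complex. -/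
def IsSubsimplex (𝒯 : SC3 Ω) (V : Set E3) : Prop :=
  ∃ v : Fin 4 → E3, HasVerts 𝒯 v ∧ ∃ s : Finset (Fin 4), s.Nonempty ∧
    V = convexHull ℝ (v '' ↑s)

/-- `d_A`: distance from the vertex `A` to the nearest other vertex. -/
def dA (𝒯 : SC3 Ω) (A : E3) : ℝ :=
  sInf {d | ∃ A', IsVertex 𝒯 A' ∧ A' ≠ A ∧ d = dist A A'}

/-- `θ_A`: minimum of `π/4` and all angles between distinct sides meeting at `A`. -/
def thetaA (𝒯 : SC3 Ω) (A : E3) : ℝ :=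
  sInf ({π/4} ∪ {θ | ∃ B B' S S', IsSideWith 𝒯 A B S ∧ IsSideWith 𝒯 A B' S' ∧ S ≠ S' ∧
    θ = EuclideanGeometry.angle B A B'})

/-- The component of `w` orthogonal to `u`. -/
def perpPart (u w : E3) : E3 := w - ((inner ℝ u w : ℝ) / (inner ℝ u u : ℝ)) • u

/-- Dihedral angle along the segment `[A,A']` between the faces `co{A,A',B}` and `co{A,A',B'}`. -/
def dihedral (A A' B B' : E3) : ℝ :=
  InnerProductGeometry.angle (perpPart (A' - A) (B - A)) (perpPart (A' - A) (B' - A))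

/-- `ω_S`: minimum of `π/4` and all dihedral angles at `S` between distinct faces containing `S`. -/
def omegaS (𝒯 : SC3 Ω) (S : Set E3) : ℝ :=
  sInf ({π/4} ∪ {ω | ∃ A A' B B' F F', S = segment ℝ A A' ∧
    IsFaceWith 𝒯 A A' B F ∧ IsFaceWith 𝒯 A A' B' F' ∧ F ≠ F' ∧ ω = dihedral A A' B B'})

/-- Distance between two sets. -/
def setDist (s t : Set E3) : ℝ := sInf {d | ∃ x ∈ s, ∃ y ∈ t, d = dist x y}

/-- `𝒯_S`: the union of all sides of the complex sharing no endpoint with the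
side with endpoints `A`, `A'`. -/
def TS (𝒯 : SC3 Ω) (A A' : E3) : Set E3 :=
  ⋃₀ {S' | ∃ B B', IsSideWith 𝒯 B B' S' ∧ B ≠ A ∧ B ≠ A' ∧ B' ≠ A ∧ B' ≠ A'}

/-- `d_S` for the side `S` with endpoints `A`, `A'`. -/
def dS (𝒯 : SC3 Ω) (A A' : E3) (S : Set E3) : ℝ :=
  min (min (dA 𝒯 A) (dA 𝒯 A')) (setDist S (TS 𝒯 A A'))

/-- `θ_S` for a side with endpoints `A`, `A'`. -/
def thetaS (𝒯 : SC3 Ω) (A A' : E3) : ℝ :=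
  min (min (thetaA 𝒯 A) (thetaA 𝒯 A')) (π/4)

/-- `𝒯_F`: the union of all faces of the complex sharing no side with the face
with vertices `A`, `B`, `P`. -/
def TF (𝒯 : SC3 Ω) (A B P : E3) : Set E3 :=
  ⋃₀ {F' | ∃ A' B' P', IsFaceWith 𝒯 A' B' P' F' ∧
    ({segment ℝ A' B', segment ℝ B' P', segment ℝ A' P'} ∩
      ({segment ℝ A B, segment ℝ B P, segment ℝ A P} : Set (Set E3)) = ∅)}

/-- `d_F` for the face `F` with vertices `A`, `B`, `P`. -/
def dF (𝒯 : SC3 Ω) (A B P : E3) (F : Set E3) : ℝ :=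
  min (min (min (dS 𝒯 A B (segment ℝ A B)) (dS 𝒯 B P (segment ℝ B P)))
    (dS 𝒯 A P (segment ℝ A P))) (setDist F (TF 𝒯 A B P))

/-- `ω_F` for the face with vertices `A`, `B`, `P`. -/
def omegaF (𝒯 : SC3 Ω) (A B P : E3) : ℝ :=
  min (min (min (omegaS 𝒯 (segment ℝ A B)) (omegaS 𝒯 (segment ℝ B P)))
      (omegaS 𝒯 (segment ℝ A P)))
    (min (min (thetaA 𝒯 A) (thetaA 𝒯 B)) (thetaA 𝒯 P))

/-- `ψ` is an admissible rigid motion for vertex `A` of side `S` of face `F`: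
it maps `A` to the origin, `S` into the nonnegative `x₁`-axis and `F` into the
quadrant `{x₁ ≥ 0, x₂ ≥ 0, x₃ = 0}`. -/
def IsPsi (A : E3) (S F : Set E3) (ψ : E3 ≃ᵢ E3) : Prop :=
  ψ A = 0 ∧ (∀ x ∈ S, ψ x 1 = 0 ∧ ψ x 2 = 0 ∧ 0 ≤ ψ x 0) ∧
    (∀ x ∈ F, ψ x 2 = 0 ∧ 0 ≤ ψ x 0 ∧ 0 ≤ ψ x 1)

/-- Cylindrical coordinates `Φ(y, r, φ) = (y, r cos φ, r sin φ)`. -/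
def Phi (y r φ : ℝ) : E3 :=
  (EuclideanSpace.equiv (Fin 3) ℝ).symm ![y, r * Real.cos φ, r * Real.sin φ]

/-- The `y` cylindrical coordinate of `ψ x`. -/
def ycoord (ψ : E3 ≃ᵢ E3) (x : E3) : ℝ := ψ x 0

/-- The `r` cylindrical coordinate of `ψ x`. -/
def rcoord (ψ : E3 ≃ᵢ E3) (x : E3) : ℝ := Real.sqrt ((ψ x 1) ^ 2 + (ψ x 2) ^ 2)

/-- The `φ ∈ [-π, π)` cylindrical coordinate of `ψ x`. -/
def phicoord (ψ : E3 ≃ᵢ E3) (x : E3) : ℝ :=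
  if Complex.arg ⟨ψ x 1, ψ x 2⟩ = π then -π else Complex.arg ⟨ψ x 1, ψ x 2⟩

/-- The function `g_δ`. -/
def gfun (δ x : ℝ) : ℝ :=
  if |x| ≤ δ then Real.sign x * (2 * |x| ^ 2 / δ - |x| ^ 3 / δ ^ 2) else x

/-- The cutoff function `c_{a,b}`. -/
def cfun (a b x : ℝ) : ℝ :=
  if x ≤ a then 0 else if x ≤ b then (1 + Real.sin (π * (x - a) / (b - a) - π / 2)) / 2 else 1

/-- The set `E_{F,S,A}(ω, δ)` (θ is the angle `θ_{F,A}` of the face `F` at `A`). -/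
def Eset (ψ : E3 ≃ᵢ E3) (θ ω δ : ℝ) : Set E3 :=
  ψ.symm '' {p | ∃ y ∈ Icc (0:ℝ) δ, ∃ r ∈ Icc 0 (y * Real.tan (15 * θ / 16)),
    ∃ φ ∈ Icc (-ω) ω, p = Phi y r φ}
/-- The map `h_{F,S,A,δ}`. -/
def hmap (ψ : E3 ≃ᵢ E3) (θ α δ : ℝ) (x : E3) : E3 :=
  let t := (1 / 2) * Real.tan (5 * θ / 8)
  let y := ycoord ψ x
  let r := rcoord ψ x
  let φ := phicoord ψ x
  if x ∈ Eset ψ θ α δ ∧ 0 < y ∧ y < δ ∧ 0 < r ∧ r < 3 * y * t then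
    ψ.symm (Phi y r
      ((1 - cfun (δ / 2) δ y) *
          ((1 - cfun (2 * y * t) (3 * y * t) r) * gfun α φ + cfun (2 * y * t) (3 * y * t) r * φ)
        + cfun (δ / 2) δ y * φ))
  else x

/-- The set `L_{S,A}(δ)` (θ is the angle `θ_A`). -/
def Lset (ψ : E3 ≃ᵢ E3) (θ δ : ℝ) : Set E3 :=
  {x | 0 < ycoord ψ x ∧ ycoord ψ x < δ ∧ 0 < rcoord ψ x ∧
    rcoord ψ x < ycoord ψ x * Real.tan (θ / 3)}

/-- The map `H_{S,A,δ}`. -/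
def Hmap (ψ : E3 ≃ᵢ E3) (θ δ : ℝ) (x : E3) : E3 :=
  let y := ycoord ψ x
  let r := rcoord ψ x
  let φ := phicoord ψ x
  if x ∈ Lset ψ θ δ then
    ψ.symm (Phi y ((1 - cfun (δ / 2) δ y) * gfun (y * Real.tan (θ / 3)) r + cfun (δ / 2) δ y * r) φ)
  else x

/-- The map `G_{A,δ}`. -/
def Gmap (A : E3) (δ : ℝ) (x : E3) : E3 :=
  if x = A then A else A + (gfun δ (dist x A) / dist x A) • (x - A)

/-- The set `D_{F,S}(δ)` (ℓ is `ℓ_S`, θ is `θ_S`, ω is `ω_S`). -/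
def Dset (ψ : E3 ≃ᵢ E3) (ℓ θ ω δ : ℝ) : Set E3 :=
  {x | ∃ y ∈ Icc (δ / 4) (ℓ - δ / 4), ∃ r ∈ Icc 0 ((δ / 4) * Real.tan (θ / 3)),
    ∃ φ ∈ Icc (-(ω / 3)) (ω / 3), x = ψ.symm (Phi y r φ)}

/-- The map `b_{F,S,δ}`. -/
def bmap (ψ : E3 ≃ᵢ E3) (S : Set E3) (ℓ θ ω δ : ℝ) (x : E3) : E3 :=
  let t := Real.tan (θ / 3)
  let y := ycoord ψ x
  let r := rcoord ψ x
  let φ := phicoord ψ x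
  let c1 := cfun (δ / 4) (δ / 2) y - cfun (ℓ - δ / 2) (ℓ - δ / 4) y
  let c2 := cfun (δ * t / 8) (δ * t / 4) r
  if x ∈ Dset ψ ℓ θ ω δ ∧ x ∉ S then
    ψ.symm (Phi y r (c1 * ((1 - c2) * gfun ω φ + c2 * φ) + (1 - c1) * φ))
  else x

/-- The set `W_S(δ)`. -/
def Wset (ψ : E3 ≃ᵢ E3) (ℓ θ δ : ℝ) : Set E3 :=
  {x | ∃ y ∈ Icc (δ / 4) (ℓ - δ / 4), ∃ r ∈ Icc 0 ((δ / 4) * Real.tan (θ / 3)),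
    ∃ φ ∈ Ico (-π) π, x = ψ.symm (Phi y r φ)}

/-- The map `w_{S,δ}`. -/
def wmap (ψ : E3 ≃ᵢ E3) (ℓ θ δ : ℝ) (x : E3) : E3 :=
  let t := Real.tan (θ / 3)
  let y := ycoord ψ x
  let r := rcoord ψ x
  let φ := phicoord ψ x
  let c := cfun (δ / 4) (δ / 2) y - cfun (ℓ - δ / 2) (ℓ - δ / 4) y
  if x ∈ Wset ψ ℓ θ δ then
    ψ.symm (Phi y (c * gfun (δ * t / 4) r + (1 - c) * r) φ)
  else x

/-- The point with coordinates `(p₁(x), p₂(x), 0)`. -/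
def proj12 (ψ : E3 ≃ᵢ E3) (x : E3) : E3 :=
  (EuclideanSpace.equiv (Fin 3) ℝ).symm ![ψ x 0, ψ x 1, 0]

/-- The spec of the cutoff `λ_{F,δ}` (t is `tan(ω_F/3)`). -/
def IsLambda (ψ : E3 ≃ᵢ E3) (F : Set E3) (t δ : ℝ) (lam : E3 → ℝ) : Prop :=
  ContDiff ℝ (⊤ : ℕ∞) lam ∧ (∀ x, lam x ∈ Icc (0:ℝ) 1) ∧
  (∀ x x', ψ x 0 = ψ x' 0 → ψ x 1 = ψ x' 1 → lam x = lam x') ∧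
  (∀ x, Metric.infDist (proj12 ψ x) ({z : E3 | z 2 = 0} \ (ψ '' F)) < t * δ / 32 → lam x = 0) ∧
  (∀ x, t * δ / 16 < Metric.infDist (proj12 ψ x) ({z : E3 | z 2 = 0} \ (ψ '' F)) → lam x = 1)

/-- The set `K_F(δ)`. -/
def Kset (ψ : E3 ≃ᵢ E3) (lam : E3 → ℝ) (t δ : ℝ) : Set E3 :=
  {x | 0 < lam x ∧ |ψ x 2| < (1 / 2) * δ * t * lam x}

/-- The map `s_{F,δ}`. -/
def smap (ψ : E3 ≃ᵢ E3) (lam : E3 → ℝ) (t δ : ℝ) (x : E3) : E3 :=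
  ψ.symm ((EuclideanSpace.equiv (Fin 3) ℝ).symm
    ![ψ x 0, ψ x 1, lam x * gfun (δ * t ^ 2 / 64) (ψ x 2) + (1 - lam x) * (ψ x 2)])


open RealInnerProductSpace in
lemma inner_map_isom (ψ : E3 ≃ᵢ E3) (a x y : E3) :
    ⟪ψ x - ψ a, ψ y - ψ a⟫ = ⟪x - a, y - a⟫ := by
  have h1 : ‖ψ x - ψ a‖ = ‖x - a‖ := by
    rw [← dist_eq_norm, ← dist_eq_norm]; exact ψ.isometry.dist_eq x a
  have h2 : ‖ψ y - ψ a‖ = ‖y - a‖ := by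
    rw [← dist_eq_norm, ← dist_eq_norm]; exact ψ.isometry.dist_eq y a
  have h3 : ‖ψ x - ψ y‖ = ‖x - y‖ := by
    rw [← dist_eq_norm, ← dist_eq_norm]; exact ψ.isometry.dist_eq x y
  have e1 := norm_sub_sq_real (ψ x - ψ a) (ψ y - ψ a)
  have e2 := norm_sub_sq_real (x - a) (y - a)
  have g1 : (ψ x - ψ a) - (ψ y - ψ a) = ψ x - ψ y := by abel
  have g2 : (x - a) - (y - a) = x - y := by abel
  rw [g1, h1, h2, h3] at e1
  rw [g2] at e2
  linarith

open RealInnerProductSpace in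
lemma inner3 (u v : E3) : ⟪u, v⟫ = u 0 * v 0 + u 1 * v 1 + u 2 * v 2 := by
  simp [PiLp.inner_apply, RCLike.inner_apply, Fin.sum_univ_three, mul_comm]

lemma norm3 (u : E3) : ‖u‖ = Real.sqrt (u 0 ^ 2 + u 1 ^ 2 + u 2 ^ 2) := by
  rw [EuclideanSpace.norm_eq]
  rw [Fin.sum_univ_three]
  simp [Real.norm_eq_abs, sq_abs]

lemma dist3 (u v : E3) :
    dist u v = Real.sqrt ((u 0 - v 0) ^ 2 + (u 1 - v 1) ^ 2 + (u 2 - v 2) ^ 2) := by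
  rw [EuclideanSpace.dist_eq, Fin.sum_univ_three]
  simp [Real.dist_eq, sq_abs]

open RealInnerProductSpace in
set_option maxHeartbeats 1000000 in
lemma key_combine (u v w : E3) (hu : ‖u‖ = 1) (hv : ‖v‖ = 1) (hw : ‖w‖ = 1)
    (c s : ℝ) (hc : 0 < c) (hs : 0 < s) (hcs : c ^ 2 + s ^ 2 = 1)
    (h1 : c < ⟪v, u⟫) (h2 : c < ⟪w, u⟫) : c ^ 2 - s ^ 2 < ⟪v, w⟫ := by
  set α := ⟪v, u⟫ with hα
  set β := ⟪w, u⟫ with hβ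
  set p := v - α • u with hp
  set q := w - β • u with hq
  have huu : ⟪u, u⟫ = 1 := by
    rw [real_inner_self_eq_norm_sq, hu]; norm_num
  have hpu : ⟪p, u⟫ = 0 := by
    rw [hp, inner_sub_left, real_inner_smul_left, huu, ← hα]; ring
  have hqu : ⟪q, u⟫ = 0 := by
    rw [hq, inner_sub_left, real_inner_smul_left, huu, ← hβ]; ring
  have huq : ⟪u, q⟫ = 0 := by rw [real_inner_comm]; exact hqu
  have hvw : ⟪v, w⟫ = α * β + ⟪p, q⟫ := by
    have hv' : v = p + α • u := by rw [hp]; abel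
    have hw' : w = q + β • u := by rw [hq]; abel
    rw [hv', hw']
    simp only [inner_add_left, inner_add_right, real_inner_smul_left,
      real_inner_smul_right, huu, hpu, hqu, huq]
    ring
  have hp2 : ‖p‖ ^ 2 = 1 - α ^ 2 := by
    rw [hp, norm_sub_sq_real, real_inner_smul_right, norm_smul, hv, hu, ← hα]
    simp [Real.norm_eq_abs, sq_abs]
    ring
  have hq2 : ‖q‖ ^ 2 = 1 - β ^ 2 := by
    rw [hq, norm_sub_sq_real, real_inner_smul_right, norm_smul, hw, hu, ← hβ]
    simp [Real.norm_eq_abs, sq_abs]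
    ring
  have hps : ‖p‖ < s := by
    have h : ‖p‖ ^ 2 < s ^ 2 := by nlinarith
    nlinarith [norm_nonneg p]
  have hqs : ‖q‖ < s := by
    have h : ‖q‖ ^ 2 < s ^ 2 := by nlinarith
    nlinarith [norm_nonneg q]
  have hpq : |⟪p, q⟫| ≤ ‖p‖ * ‖q‖ := abs_real_inner_le_norm p q
  have := neg_abs_le ⟪p, q⟫
  nlinarith [norm_nonneg p, norm_nonneg q]

open RealInnerProductSpace in
set_option maxHeartbeats 1000000 in
lemma cone_lemma (A : E3) (S F : Set E3) (ψ : E3 ≃ᵢ E3) (hψ : IsPsi A S F ψ)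
    (B : E3) (hBS : B ∈ S) (hBA : B ≠ A) (θ δ : ℝ) (hθ0 : 0 ≤ θ) (hθ4 : θ ≤ π / 4)
    (x : E3) (hx : x ∈ Lset ψ θ δ) :
    0 < θ ∧ dist x A < 2 * δ ∧ x ≠ A ∧
      Real.cos (θ / 3) * (‖B - A‖ * ‖x - A‖) < ⟪B - A, x - A⟫ := by
  obtain ⟨hy0, hyδ, hr0, hrt⟩ := hx
  set y : ℝ := ψ x 0 with hy
  set r : ℝ := rcoord ψ x with hr
  have hpi := Real.pi_pos
  have hr2 : r ^ 2 = (ψ x 1) ^ 2 + (ψ x 2) ^ 2 := Real.sq_sqrt (by positivity)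
  set t : ℝ := Real.tan (θ / 3) with htdef
  have hy0' : 0 < y := hy0
  have hrt' : r < y * t := hrt
  have ht : 0 < t := by nlinarith
  have hθpos : 0 < θ := by
    rcases eq_or_lt_of_le hθ0 with h | h
    · exfalso; rw [← h] at htdef; simp [htdef] at ht
    · exact h
  have hθ3a : 0 < θ / 3 := by linarith
  have hθ3b : θ / 3 < π / 2 := by linarith
  have hcθ : 0 < Real.cos (θ / 3) := Real.cos_pos_of_mem_Ioo ⟨by linarith, hθ3b⟩
  have hsθ : 0 < Real.sin (θ / 3) := Real.sin_pos_of_pos_of_lt_pi hθ3a (by linarith)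
  have hψA : ψ A = 0 := hψ.1
  obtain ⟨hB1, hB2, hB0⟩ := hψ.2.1 B hBS
  set L : ℝ := ψ B 0 with hL
  have hnx : ‖x - A‖ = Real.sqrt (y ^ 2 + r ^ 2) := by
    rw [← dist_eq_norm, ← ψ.dist_eq, hψA, dist_zero_right, norm3, hr2, ← hy]
    congr 1
    ring
  have hnB : ‖B - A‖ = L := by
    rw [← dist_eq_norm, ← ψ.dist_eq, hψA, dist_zero_right, norm3, hB1, hB2]
    simp [Real.sqrt_sq hB0]
    exact Real.sqrt_sq hB0
  have hL0 : 0 < L := by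
    rw [← hnB]; exact norm_pos_iff.mpr (sub_ne_zero.mpr hBA)
  have hinner : ⟪B - A, x - A⟫ = L * y := by
    have h0 : ⟪ψ B - ψ A, ψ x - ψ A⟫ = ⟪B - A, x - A⟫ := inner_map_isom ψ A B x
    rw [← h0, hψA, sub_zero, sub_zero, inner3, hB1, hB2]
    ring
  set s : ℝ := Real.sqrt (y ^ 2 + r ^ 2) with hs
  have hs0 : 0 < s := Real.sqrt_pos.mpr (by positivity)
  have hs2 : s ^ 2 = y ^ 2 + r ^ 2 := Real.sq_sqrt (by positivity)
  have ht1 : t < 1 := by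
    rw [htdef, ← Real.tan_pi_div_four]
    exact Real.strictMonoOn_tan ⟨by linarith, by linarith⟩ ⟨by linarith, by linarith⟩
      (by linarith)
  have hry : r < y := by nlinarith
  have hyδ' : y < δ := hyδ
  have hδ0 : 0 < δ := lt_trans hy0' hyδ'
  refine ⟨hθpos, ?_, ?_, ?_⟩
  · rw [dist_eq_norm, hnx]
    have hsq : s ^ 2 < (2 * δ) ^ 2 := by nlinarith
    exact lt_of_pow_lt_pow_left₀ 2 (by linarith) hsq
  · intro h
    rw [h, sub_self, norm_zero] at hnx
    linarith
  · rw [hinner, hnx, hnB]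
    have hkey : r * Real.cos (θ / 3) < y * Real.sin (θ / 3) := by
      have := mul_lt_mul_of_pos_right hrt hcθ
      rw [htdef] at this
      rw [mul_assoc, Real.tan_eq_sin_div_cos, div_mul_cancel₀] at this
      · exact this
      · exact ne_of_gt hcθ
    have hsc := Real.sin_sq_add_cos_sq (θ / 3)
    have h1 : (r * Real.cos (θ / 3)) ^ 2 < (y * Real.sin (θ / 3)) ^ 2 := by
      nlinarith [mul_pos hr0 hcθ]
    have h2 : (Real.cos (θ / 3) * s) ^ 2 < y ^ 2 := by nlinarith
    have h3 : Real.cos (θ / 3) * s < y := by nlinarith [mul_pos hcθ hs0]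
    nlinarith [mul_lt_mul_of_pos_left h3 hL0]

lemma thetaA_bounds (𝒯 : SC3 Ω) (A : E3) : 0 ≤ thetaA 𝒯 A ∧ thetaA 𝒯 A ≤ π / 4 := by
  have hpi := Real.pi_pos
  have hbdd : ∀ m ∈ ({π/4} ∪ {θ | ∃ B B' S S', IsSideWith 𝒯 A B S ∧ IsSideWith 𝒯 A B' S' ∧
      S ≠ S' ∧ θ = EuclideanGeometry.angle B A B'} : Set ℝ), 0 ≤ m := by
    rintro m (rfl | ⟨B, B', S, S', _, _, _, rfl⟩)
    · linarith
    · exact EuclideanGeometry.angle_nonneg _ _ _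
  constructor
  · exact le_csInf ⟨π/4, Or.inl rfl⟩ hbdd
  · exact csInf_le ⟨0, hbdd⟩ (Or.inl rfl)

lemma thetaA_le_angle (𝒯 : SC3 Ω) (A B B' : E3) (S S' : Set E3)
    (h1 : IsSideWith 𝒯 A B S) (h2 : IsSideWith 𝒯 A B' S') (h3 : S ≠ S') :
    thetaA 𝒯 A ≤ EuclideanGeometry.angle B A B' := by
  have hpi := Real.pi_pos
  have hbdd : ∀ m ∈ ({π/4} ∪ {θ | ∃ B B' S S', IsSideWith 𝒯 A B S ∧ IsSideWith 𝒯 A B' S' ∧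
      S ≠ S' ∧ θ = EuclideanGeometry.angle B A B'} : Set ℝ), 0 ≤ m := by
    rintro m (rfl | ⟨B, B', S, S', _, _, _, rfl⟩)
    · linarith
    · exact EuclideanGeometry.angle_nonneg _ _ _
  exact csInf_le ⟨0, hbdd⟩ (Or.inr ⟨B, B', S, S', h1, h2, h3, rfl⟩)

lemma dA_le (𝒯 : SC3 Ω) (A A' : E3) (hA' : IsVertex 𝒯 A') (h : A' ≠ A) :
    dA 𝒯 A ≤ dist A A' := by
  refine csInf_le ⟨0, ?_⟩ ⟨A', hA', h, rfl⟩
  rintro d ⟨A'', _, _, rfl⟩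
  exact dist_nonneg

open RealInnerProductSpace in
lemma normalized_inner_lt {b u : E3} {c : ℝ} (hb : b ≠ 0) (hu : u ≠ 0)
    (h : c * (‖b‖ * ‖u‖) < ⟪b, u⟫) : c < ⟪‖b‖⁻¹ • b, ‖u‖⁻¹ • u⟫ := by
  have hb0 : (0:ℝ) < ‖b‖ := norm_pos_iff.mpr hb
  have hu0 : (0:ℝ) < ‖u‖ := norm_pos_iff.mpr hu
  rw [real_inner_smul_left, real_inner_smul_right]
  have h2 := mul_lt_mul_of_pos_left h (show (0:ℝ) < ‖b‖⁻¹ * ‖u‖⁻¹ by positivity)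
  calc c = ‖b‖⁻¹ * ‖u‖⁻¹ * (c * (‖b‖ * ‖u‖)) := by field_simp
    _ < ‖b‖⁻¹ * ‖u‖⁻¹ * ⟪b, u⟫ := h2
    _ = ‖b‖⁻¹ * (‖u‖⁻¹ * ⟪b, u⟫) := by ring


set_option maxHeartbeats 1000000 in
open RealInnerProductSpace in
theorem statement6 (Ω : Set E3) (𝒯 : SC3 Ω)
    (A B P : E3) (S F : Set E3)
    (hS : IsSideWith 𝒯 A B S) (hF : IsFaceWith 𝒯 A B P F)
    (ψ : E3 ≃ᵢ E3) (hψ : IsPsi A S F ψ)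
    (δ : ℝ) (hδ : 0 < δ) (hδA : 4 * δ < dA 𝒯 A)
    (A' B' P' : E3) (S' F' : Set E3)
    (hS' : IsSideWith 𝒯 A' B' S') (hF' : IsFaceWith 𝒯 A' B' P' F')
    (ψ' : E3 ≃ᵢ E3) (hψ' : IsPsi A' S' F' ψ')
    (δ' : ℝ) (hδ' : 0 < δ') (hδ'A : 4 * δ' < dA 𝒯 A') :
    ((A = A' ∧ S = S') ∨ Lset ψ (thetaA 𝒯 A) δ ∩ Lset ψ' (thetaA 𝒯 A') δ' = ∅) ∧
    Lset ψ (thetaA 𝒯 A) δ ⊆ Metric.thickening δ S := by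
  have hpi := Real.pi_pos
  obtain ⟨v, hv, i, j, hij, hAi, hBj, hSseg⟩ := hS
  obtain ⟨v', hv', i', j', hij', hAi', hBj', hSseg'⟩ := hS'
  have hS : IsSideWith 𝒯 A B S := ⟨v, hv, i, j, hij, hAi, hBj, hSseg⟩
  have hS' : IsSideWith 𝒯 A' B' S' := ⟨v', hv', i', j', hij', hAi', hBj', hSseg'⟩
  have hvexA : IsVertex 𝒯 A := ⟨v, hv, ⟨i, hAi.symm⟩⟩
  have hvexB : IsVertex 𝒯 B := ⟨v, hv, ⟨j, hBj.symm⟩⟩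
  have hvexA' : IsVertex 𝒯 A' := ⟨v', hv', ⟨i', hAi'.symm⟩⟩
  have hBA : B ≠ A := by
    rw [hAi, hBj]
    exact fun h => hij (hv.1.injective h.symm)
  have hB'A' : B' ≠ A' := by
    rw [hAi', hBj']
    exact fun h => hij' (hv'.1.injective h.symm)
  have hθb := thetaA_bounds 𝒯 A
  have hθb' := thetaA_bounds 𝒯 A'
  have hBS : B ∈ S := hSseg ▸ right_mem_segment ℝ A B
  have hB'S' : B' ∈ S' := hSseg' ▸ right_mem_segment ℝ A' B'
  constructor
  · by_cases hAA : A = A' ∧ S = S'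
    · exact Or.inl hAA
    · right
      rw [Set.eq_empty_iff_forall_notMem]
      rintro x ⟨hx, hx'⟩
      obtain ⟨hθp, hdx, hxA, hin⟩ :=
        cone_lemma A S F ψ hψ B hBS hBA _ δ hθb.1 hθb.2 x hx
      obtain ⟨hθp', hdx', hxA', hin'⟩ :=
        cone_lemma A' S' F' ψ' hψ' B' hB'S' hB'A' _ δ' hθb'.1 hθb'.2 x hx'
      by_cases hA : A = A'
      · have hSS : S ≠ S' := fun h => hAA ⟨hA, h⟩
        subst hA
        set θ := thetaA 𝒯 A with hθdef
        have hbne : B - A ≠ 0 := sub_ne_zero.mpr hBA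
        have hb'ne : B' - A ≠ 0 := sub_ne_zero.mpr hB'A'
        have hune : x - A ≠ 0 := sub_ne_zero.mpr hxA
        have hcθ : 0 < Real.cos (θ / 3) :=
          Real.cos_pos_of_mem_Ioo ⟨by linarith, by linarith [hθb.2]⟩
        have hsθ : 0 < Real.sin (θ / 3) :=
          Real.sin_pos_of_pos_of_lt_pi (by linarith) (by linarith [hθb.2])
        have hcs : Real.cos (θ / 3) ^ 2 + Real.sin (θ / 3) ^ 2 = 1 := by
          rw [add_comm]; exact Real.sin_sq_add_cos_sq (θ / 3)
        have hk := key_combine (‖x - A‖⁻¹ • (x - A)) (‖B - A‖⁻¹ • (B - A))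
          (‖B' - A‖⁻¹ • (B' - A)) (norm_smul_inv_norm hune) (norm_smul_inv_norm hbne)
          (norm_smul_inv_norm hb'ne) (Real.cos (θ / 3)) (Real.sin (θ / 3)) hcθ hsθ hcs
          (normalized_inner_lt hbne hune hin) (normalized_inner_lt hb'ne hune hin')
        have hang : EuclideanGeometry.angle B A B' =
            InnerProductGeometry.angle (B - A) (B' - A) := by
          rw [EuclideanGeometry.angle, vsub_eq_sub, vsub_eq_sub]
        have hinner_eq : ⟪‖B - A‖⁻¹ • (B - A), ‖B' - A‖⁻¹ • (B' - A)⟫ =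
            ⟪B - A, B' - A⟫ / (‖B - A‖ * ‖B' - A‖) := by
          rw [real_inner_smul_left, real_inner_smul_right]
          field_simp
        have hcos := InnerProductGeometry.cos_angle (B - A) (B' - A)
        have hcc : Real.cos (2 * (θ / 3)) <
            Real.cos (InnerProductGeometry.angle (B - A) (B' - A)) := by
          rw [Real.cos_two_mul', hcos]
          rw [hinner_eq] at hk
          linarith
        have hanglt : InnerProductGeometry.angle (B - A) (B' - A) < 2 * (θ / 3) := by
          have hmem1 : 2 * (θ / 3) ∈ Set.Icc 0 π := ⟨by linarith, by linarith [hθb.2]⟩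
          have hmem2 : InnerProductGeometry.angle (B - A) (B' - A) ∈ Set.Icc 0 π :=
            ⟨InnerProductGeometry.angle_nonneg _ _, InnerProductGeometry.angle_le_pi _ _⟩
          exact (Real.strictAntiOn_cos.lt_iff_gt hmem1 hmem2).mp hcc
        have hge : θ ≤ EuclideanGeometry.angle B A B' :=
          thetaA_le_angle 𝒯 A B B' S S' hS hS' hSS
        rw [hang] at hge
        linarith
      · have h1 : dA 𝒯 A ≤ dist A A' := dA_le 𝒯 A A' hvexA' (fun h => hA h.symm)
        have h2 : dA 𝒯 A' ≤ dist A' A := dA_le 𝒯 A' A hvexA hA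
        have h3 := dist_triangle A x A'
        rw [dist_comm A x] at h3
        rw [dist_comm A' A] at h2
        linarith
  · intro x hx
    obtain ⟨hθp, hdx, hxA, hin⟩ := cone_lemma A S F ψ hψ B hBS hBA _ δ hθb.1 hθb.2 x hx
    obtain ⟨hy0, hyδ, hr0, hrt⟩ := hx
    set y : ℝ := ψ x 0 with hy
    set r : ℝ := rcoord ψ x with hrd
    have hy0' : 0 < y := hy0
    have hyδ' : y < δ := hyδ
    set t : ℝ := Real.tan (thetaA 𝒯 A / 3) with htdef
    have hrt' : r < y * t := hrt
    have ht0 : 0 < t := by nlinarith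
    have ht1 : t < 1 := by
      rw [htdef, ← Real.tan_pi_div_four]
      exact Real.strictMonoOn_tan ⟨by linarith [hθb.1], by linarith [hθb.2]⟩
        ⟨by linarith, by linarith⟩ (by linarith [hθb.2, hθb.1])
    have hry : r < y := by nlinarith
    have hr2 : r ^ 2 = (ψ x 1) ^ 2 + (ψ x 2) ^ 2 := Real.sq_sqrt (by positivity)
    set L : ℝ := dist A B with hLd
    have hLB : dA 𝒯 A ≤ L := dA_le 𝒯 A B hvexB hBA
    have hL4 : 4 * δ < L := lt_of_lt_of_le hδA hLB
    have hL0 : 0 < L := by linarith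
    set k : ℝ := y / L with hkd
    have hk0 : 0 ≤ k := by positivity
    have hk1 : k ≤ 1 := by
      rw [hkd, div_le_one hL0]; linarith
    set x' : E3 := A + k • (B - A) with hx'd
    have hx'S : x' ∈ S := by
      rw [hSseg]
      exact ⟨1 - k, k, by linarith, hk0, by ring, by
        rw [hx'd, sub_smul, one_smul, smul_sub]; abel⟩
    obtain ⟨hx'1, hx'2, hx'0⟩ := hψ.2.1 x' hx'S
    have hψA : ψ A = 0 := hψ.1
    have hdist' : dist x' A = y := by
      rw [dist_eq_norm, hx'd]
      have hsub : A + k • (B - A) - A = k • (B - A) := by abel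
      rw [hsub, norm_smul, Real.norm_eq_abs, abs_of_nonneg hk0, ← dist_eq_norm,
        dist_comm, ← hLd, hkd]
      field_simp
    have hψx'0 : ψ x' 0 = y := by
      have h1 : dist (ψ x') 0 = y := by rw [← hψA, ψ.dist_eq]; exact hdist'
      rw [dist_zero_right, norm3, hx'1, hx'2] at h1
      rw [← h1]
      simp [Real.sqrt_sq hx'0]
    rw [Metric.mem_thickening_iff]
    refine ⟨x', hx'S, ?_⟩
    have hdd : dist x x' = r := by
      rw [← ψ.dist_eq, dist3, hψx'0, hx'1, hx'2, ← hy]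
      rw [hrd, rcoord]
      congr 1
      ring
    rw [hdd]
    linarith
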